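/- Let φ and u be orthonormal p-frames with ⟨⟨φ, u⟩⟩ = 0, let W be an orthogonal real p×p matrix, and let σ : Fin p → ℝ. Let C and S be the diagonal p×p matrices with diagonal entries cos(σᵢ) and sin(σᵢ), respectively. Then the frame γ = φ·(W C) + u·S is orthonormal: ⟨⟨γ, γ⟩⟩ = Iₚ. (This shows the Grassmann exponential formula Exp([φ], ψ) = [φ·(W cos Σ) + u·(sin Σ)], built from a singular value decomposition ψ^h = u·Σ·Wᵀ of the horizontal lift, produces a representative on the Stiefel manifold.) -/

import Mathlib

open Matrix

noncomputable section

/-- The outer product of two `p`-frames: `⟨⟨v,w⟩⟩ᵢⱼ = ⟪vᵢ, wⱼ⟫`. -/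
def frameOuter {H : Type*} [NormedAddCommGroup H] [InnerProductSpace ℝ H] {p : ℕ}
    (v w : Fin p → H) : Matrix (Fin p) (Fin p) ℝ :=
  fun i j => (inner ℝ (v i) (w j) : ℝ)

/-- The action of a real `p × p` matrix on a `p`-frame: `(v·A)ⱼ = ∑ᵢ Aᵢⱼ • vᵢ`. -/
def frameAct {H : Type*} [NormedAddCommGroup H] [InnerProductSpace ℝ H] {p : ℕ}
    (v : Fin p → H) (A : Matrix (Fin p) (Fin p) ℝ) : Fin p → H :=
  fun j => ∑ i, A i j • v i

/-- The `L²`-type inner product of two `p`-frames: `(v,w)_H = ∑ⱼ ⟪vⱼ, wⱼ⟫`. -/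
def frameInner {H : Type*} [NormedAddCommGroup H] [InnerProductSpace ℝ H] {p : ℕ}
    (v w : Fin p → H) : ℝ :=
  ∑ j, (inner ℝ (v j) (w j) : ℝ)

/-- The symmetric part of a square matrix: `sym M = (M + Mᵀ)/2`. -/
def symPart {p : ℕ} (M : Matrix (Fin p) (Fin p) ℝ) : Matrix (Fin p) (Fin p) ℝ :=
  (1 / 2 : ℝ) • (M + Mᵀ)

/-! Since `⟨⟨v·A, w·B⟩⟩ = Aᵀ ⟨⟨v,w⟩⟩ B`, the Gram matrix of `γ` is
`C Wᵀ W C + S S = C² + S² = 1`, the cross terms vanishing because `⟨⟨φ,u⟩⟩ = 0`. -/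

section FrameOuter

variable {H : Type*} [NormedAddCommGroup H] [InnerProductSpace ℝ H] {p : ℕ}

lemma frameOuter_add_left (v v' w : Fin p → H) :
    frameOuter (v + v') w = frameOuter v w + frameOuter v' w := by
  ext i j
  simp [frameOuter, inner_add_left]

lemma frameOuter_add_right (v w w' : Fin p → H) :
    frameOuter v (w + w') = frameOuter v w + frameOuter v w' := by
  ext i j
  simp [frameOuter, inner_add_right]

lemma transpose_frameOuter (v w : Fin p → H) : (frameOuter v w)ᵀ = frameOuter w v := by
  ext i j
  simp [frameOuter, real_inner_comm]

lemma frameOuter_frameAct (v w : Fin p → H) (A B : Matrix (Fin p) (Fin p) ℝ) :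
    frameOuter (frameAct v A) (frameAct w B) = Aᵀ * frameOuter v w * B := by
  ext i j
  simp only [frameOuter, frameAct, inner_sum, sum_inner, real_inner_smul_left,
    real_inner_smul_right, mul_apply, transpose_apply, Finset.sum_mul]
  exact Finset.sum_congr rfl fun _ _ => Finset.sum_congr rfl fun _ _ => by ring

lemma frameOuter_frameAct_add_frameAct_self {φ u : Fin p → H}
    (hφ : frameOuter φ φ = 1) (hu : frameOuter u u = 1) (hor : frameOuter φ u = 0)
    (A B : Matrix (Fin p) (Fin p) ℝ) :
    frameOuter (frameAct φ A + frameAct u B) (frameAct φ A + frameAct u B) =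
      Aᵀ * A + Bᵀ * B := by
  have hor' : frameOuter u φ = 0 := by rw [← transpose_frameOuter, hor, transpose_zero]
  simp only [frameOuter_add_left, frameOuter_add_right, frameOuter_frameAct, hφ, hu, hor,
    hor', mul_one, mul_zero, zero_mul, add_zero, zero_add]

end FrameOuter

lemma diagonal_cos_mul_self_add_diagonal_sin_mul_self {p : ℕ} (σ : Fin p → ℝ) :
    (diagonal fun i => Real.cos (σ i)) * (diagonal fun i => Real.cos (σ i)) +
      (diagonal fun i => Real.sin (σ i)) * (diagonal fun i => Real.sin (σ i)) = 1 := by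
  rw [diagonal_mul_diagonal, diagonal_mul_diagonal, diagonal_add, ← diagonal_one]
  exact congrArg diagonal (funext fun i => by rw [← sq, ← sq, Real.cos_sq_add_sin_sq])

theorem grassmann_exponential_orthonormal_general {H : Type*} [NormedAddCommGroup H]
    [InnerProductSpace ℝ H] {p : ℕ} (φ u : Fin p → H)
    (hφ : frameOuter φ φ = 1) (hu : frameOuter u u = 1) (hor : frameOuter φ u = 0)
    (W : Matrix (Fin p) (Fin p) ℝ) (hW : Wᵀ * W = 1) (σ : Fin p → ℝ) :
    frameOuter
      (frameAct φ (W * Matrix.diagonal fun i => Real.cos (σ i)) +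
        frameAct u (Matrix.diagonal fun i => Real.sin (σ i)))
      (frameAct φ (W * Matrix.diagonal fun i => Real.cos (σ i)) +
        frameAct u (Matrix.diagonal fun i => Real.sin (σ i))) = 1 := by
  rw [frameOuter_frameAct_add_frameAct_self hφ hu hor, transpose_mul, diagonal_transpose,
    diagonal_transpose, Matrix.mul_assoc, ← Matrix.mul_assoc Wᵀ, hW, Matrix.one_mul,
    diagonal_cos_mul_self_add_diagonal_sin_mul_self]

/-- The Grassmann exponential formula produces an orthonormal frame:
if `φ`, `u` are orthonormal frames with `⟨⟨φ,u⟩⟩ = 0`, `W` is orthogonal and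
`C = diag(cos σᵢ)`, `S = diag(sin σᵢ)`, then `γ = φ·(W C) + u·S` is orthonormal. -/
theorem grassmann_exponential_orthonormal {H : Type*} [NormedAddCommGroup H]
    [InnerProductSpace ℝ H] {p : ℕ} (hp : 1 ≤ p) (φ u : Fin p → H)
    (hφ : frameOuter φ φ = 1) (hu : frameOuter u u = 1) (hor : frameOuter φ u = 0)
    (W : Matrix (Fin p) (Fin p) ℝ) (hW : Wᵀ * W = 1) (σ : Fin p → ℝ) :
    frameOuter
      (frameAct φ (W * Matrix.diagonal fun i => Real.cos (σ i)) +
        frameAct u (Matrix.diagonal fun i => Real.sin (σ i)))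
      (frameAct φ (W * Matrix.diagonal fun i => Real.cos (σ i)) +
        frameAct u (Matrix.diagonal fun i => Real.sin (σ i))) = 1 :=
  grassmann_exponential_orthonormal_general φ u hφ hu hor W hW σ
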